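/- With the notation of the magnon transfer operator: let D = diag(1,ω,ω̄,1)⊗I⊗I on C^2⊗C^2⊗C^{r+1}⊗C^{s+1} and let X = E_{r,s} − D. Then (E_{r,s} − I)^{m}(E_{r,s} − ωI)^{m}(E_{r,s} − ω̄I)^{m} = 0 for m = min(r,s)+2. In particular every Jordan block of E_{r,s} has size at most min(r,s)+2. -/

import Mathlib

open Kronecker Polynomial

noncomputable def ω (n : ℕ) : ℂ := Complex.exp (2 * Real.pi * Complex.I / n)

noncomputable def A0 : Matrix (Fin 2) (Fin 2) ℂ := !![0, 0; 1, 0]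

noncomputable def A1 (n : ℕ) : Matrix (Fin 2) (Fin 2) ℂ := !![1, 0; 0, ω n]

noncomputable def mconj (A : Matrix (Fin 2) (Fin 2) ℂ) : Matrix (Fin 2) (Fin 2) ℂ :=
  A.map (starRingEnd ℂ)

/-- The raising operator `J₊` of the spin-`r/2` irreducible representation of `su(2)`,
acting on `ℂ^{r+1}`: `J₊|k⟩ = √((k+1)(r-k)) |k+1⟩` (strictly lower triangular in the
standard ordered basis). -/
noncomputable def Jplus (r : ℕ) : Matrix (Fin (r + 1)) (Fin (r + 1)) ℂ :=
  Matrix.of fun i j =>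
    if (i : ℕ) = (j : ℕ) + 1 then (Real.sqrt (((j : ℕ) + 1) * (r - (j : ℕ))) : ℂ) else 0

/-- The combined transfer operator `E_{r,s}` of magnon states on
`ℂ²⊗ℂ²⊗ℂ^{r+1}⊗ℂ^{s+1}`. -/
noncomputable def Ers (n r s : ℕ) :
    Matrix (((Fin 2 × Fin 2) × Fin (r + 1)) × Fin (s + 1))
      (((Fin 2 × Fin 2) × Fin (r + 1)) × Fin (s + 1)) ℂ :=
  (mconj A0 ⊗ₖ A0) ⊗ₖ (1 : Matrix (Fin (r + 1)) (Fin (r + 1)) ℂ) ⊗ₖ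
      (1 : Matrix (Fin (s + 1)) (Fin (s + 1)) ℂ) +
    (mconj (A1 n) ⊗ₖ A1 n) ⊗ₖ (1 : Matrix (Fin (r + 1)) (Fin (r + 1)) ℂ) ⊗ₖ
      (1 : Matrix (Fin (s + 1)) (Fin (s + 1)) ℂ) +
    (mconj A0 ⊗ₖ A1 n) ⊗ₖ (1 : Matrix (Fin (r + 1)) (Fin (r + 1)) ℂ) ⊗ₖ Jplus s +
    (mconj (A1 n) ⊗ₖ A0) ⊗ₖ Jplus r ⊗ₖ (1 : Matrix (Fin (s + 1)) (Fin (s + 1)) ℂ) +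
    (mconj (A1 n) ⊗ₖ A1 n) ⊗ₖ Jplus r ⊗ₖ Jplus s


/-!
Write `E_{r,s} = D + ∑ᵢ Xᵢ` with `D = diag(1, ω, ω̄, 1) ⊗ I ⊗ I` and four letters `Xᵢ`. Each
letter satisfies `D Xᵢ = cᵢ Xᵢ D`, so products of elements of the span of the words
`Xᵢ₁ ⋯ Xᵢₖ Dᵗ` with `k ≥ k₁` and `k ≥ k₂` land in the span of such words with `k ≥ k₁ + k₂`.
As `p(D) = 0` for `p = (X - 1)(X - ω)(X - ω̄)`, `p(E)` lies in the span of words with `k ≥ 1`,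
hence `p(E)^m` in the span of words with `k ≥ m`. On a basis vector `|a, b, j, k⟩` every letter
raises both weights `a + j ≤ r + 1` and `b + k ≤ s + 1` by exactly one, so all words with
`min(r, s) + 2` letters vanish.
-/

section ScalarCommute

variable (K : Type*) {A : Type*} [CommRing K] [Ring A] [Algebra K A]

def ScalarCommute (D y : A) : Prop := ∃ c : K, D * y = c • (y * D)

variable {K}

theorem ScalarCommute.refl (D : A) : ScalarCommute K D D :=
  ⟨1, by rw [one_smul]⟩

theorem ScalarCommute.one_left (y : A) : ScalarCommute K 1 y :=
  ⟨1, by rw [one_smul, one_mul, mul_one]⟩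

theorem ScalarCommute.one_right (D : A) : ScalarCommute K D 1 := ⟨1, by simp⟩

theorem ScalarCommute.mul_right {D y z : A} (hy : ScalarCommute K D y)
    (hz : ScalarCommute K D z) : ScalarCommute K D (y * z) := by
  obtain ⟨c, hc⟩ := hy
  obtain ⟨d, hd⟩ := hz
  refine ⟨c * d, ?_⟩
  rw [← mul_assoc, hc, smul_mul_assoc, mul_assoc, hd, mul_smul_comm, smul_smul, mul_assoc]

theorem ScalarCommute.pow_left {D y : A} (h : ScalarCommute K D y) (t : ℕ) :
    ScalarCommute K (D ^ t) y := by
  obtain ⟨c, hc⟩ := h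
  refine ⟨c ^ t, ?_⟩
  induction t with
  | zero => simp
  | succ t ih =>
    rw [pow_succ, mul_assoc, hc, mul_smul_comm, ← mul_assoc, ih, smul_mul_assoc, smul_smul,
      mul_assoc, ← pow_succ, ← pow_succ']

theorem ScalarCommute.kronecker {m m' : Type*} [Fintype m] [DecidableEq m] [Fintype m']
    [DecidableEq m'] {P Q : Matrix m m K} {P' Q' : Matrix m' m' K} (h : ScalarCommute K P Q)
    (h' : ScalarCommute K P' Q') : ScalarCommute K (P ⊗ₖ P') (Q ⊗ₖ Q') := by
  obtain ⟨c, hc⟩ := h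
  obtain ⟨c', hc'⟩ := h'
  refine ⟨c * c', ?_⟩
  rw [← Matrix.mul_kronecker_mul, ← Matrix.mul_kronecker_mul, hc, hc', Matrix.smul_kronecker,
    Matrix.kronecker_smul, smul_smul]

end ScalarCommute

section WordFiltration

variable (K : Type*) {A ι : Type*} [CommRing K] [Ring A] [Algebra K A]

def wordFiltration (D : A) (x : ι → A) (k : ℕ) : Submodule K A :=
  Submodule.span K {a | ∃ (l : List ι) (t : ℕ), k ≤ l.length ∧ (l.map x).prod * D ^ t = a}

variable {K} {D : A} {x : ι → A}

theorem wordFiltration_antitone : Antitone (wordFiltration K D x) := fun _ _ hk =>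
  Submodule.span_mono fun _ ⟨l, t, hl, ha⟩ => ⟨l, t, hk.trans hl, ha⟩

theorem pow_mem_wordFiltration_zero (t : ℕ) : D ^ t ∈ wordFiltration K D x 0 :=
  Submodule.subset_span ⟨[], t, le_rfl, one_mul _⟩

theorem mem_wordFiltration_one (i : ι) : x i ∈ wordFiltration K D x 1 :=
  Submodule.subset_span ⟨[i], 0, le_rfl, by simp⟩

theorem mul_mem_wordFiltration (hx : ∀ i, ScalarCommute K D (x i)) {a b : A} {k k' : ℕ}
    (ha : a ∈ wordFiltration K D x k) (hb : b ∈ wordFiltration K D x k') :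
    a * b ∈ wordFiltration K D x (k + k') := by
  have hab := Submodule.mul_mem_mul ha hb
  rw [wordFiltration, wordFiltration, Submodule.span_mul_span] at hab
  refine Submodule.span_le.mpr ?_ hab
  rintro _ ⟨_, ⟨l, t, hl, rfl⟩, _, ⟨l', t', hl', rfl⟩, rfl⟩
  obtain ⟨c, hc⟩ : ScalarCommute K (D ^ t) (l'.map x).prod :=
    List.prod_induction _ (fun _ _ => ScalarCommute.mul_right) (ScalarCommute.one_right _)
      (by simpa using fun i _ => (hx i).pow_left t)
  have hword : (l.map x).prod * D ^ t * ((l'.map x).prod * D ^ t') =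
      c • (((l ++ l').map x).prod * D ^ (t + t')) := by
    rw [mul_assoc, ← mul_assoc (D ^ t), hc, smul_mul_assoc, mul_smul_comm, List.map_append,
      List.prod_append, pow_add]
    simp only [mul_assoc]
  change _ * _ ∈ _
  rw [hword]
  exact Submodule.smul_mem _ _ (Submodule.subset_span ⟨l ++ l', t + t', by rw [List.length_append]; omega, rfl⟩)

theorem wordFiltration_eq_bot {m : ℕ} (hnil : ∀ l : List ι, m ≤ l.length → (l.map x).prod = 0) :
    wordFiltration K D x m = ⊥ :=
  eq_bot_iff.mpr <| Submodule.span_le.mpr fun _ ⟨l, t, hl, ha⟩ => by simp [← ha, hnil l hl]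

theorem add_pow_sub_pow_mem_wordFiltration (hx : ∀ i, ScalarCommute K D (x i)) {S : A}
    (hS : S ∈ wordFiltration K D x 1) (j : ℕ) :
    (D + S) ^ j - D ^ j ∈ wordFiltration K D x 1 := by
  have hDS : D + S ∈ wordFiltration K D x 0 :=
    add_mem (by simpa using pow_mem_wordFiltration_zero (K := K) (x := x) (D := D) 1)
      (wordFiltration_antitone (by simp) hS)
  induction j with
  | zero => simp
  | succ j ih =>
    have hsplit : (D + S) ^ (j + 1) - D ^ (j + 1) =
        ((D + S) ^ j - D ^ j) * (D + S) + D ^ j * S := by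
      noncomm_ring
    have h₁ := mul_mem_wordFiltration hx ih hDS
    have h₂ := mul_mem_wordFiltration hx (pow_mem_wordFiltration_zero j) hS
    rw [add_zero] at h₁
    rw [zero_add] at h₂
    rw [hsplit]
    exact add_mem h₁ h₂

theorem aeval_add_sub_aeval_mem_wordFiltration (hx : ∀ i, ScalarCommute K D (x i)) {S : A}
    (hS : S ∈ wordFiltration K D x 1) (p : K[X]) :
    aeval (D + S) p - aeval D p ∈ wordFiltration K D x 1 := by
  induction p using Polynomial.induction_on' with
  | add p q hp hq => simpa only [map_add, add_sub_add_comm] using add_mem hp hq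
  | monomial j c =>
    simpa only [aeval_monomial, ← Algebra.smul_def, ← smul_sub] using
      Submodule.smul_mem _ c (add_pow_sub_pow_mem_wordFiltration hx hS j)

theorem aeval_add_sum_pow_eq_zero [Fintype ι] (hx : ∀ i, ScalarCommute K D (x i)) {m : ℕ}
    (hnil : ∀ l : List ι, m ≤ l.length → (l.map x).prod = 0) {p : K[X]}
    (hp : aeval D p = 0) : aeval (D + ∑ i, x i) p ^ m = 0 := by
  have hP : aeval (D + ∑ i, x i) p ∈ wordFiltration K D x 1 := by
    simpa [hp] using aeval_add_sub_aeval_mem_wordFiltration hx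
      (Submodule.sum_mem _ fun i _ => mem_wordFiltration_one i) p
  have hpow : ∀ j, aeval (D + ∑ i, x i) p ^ j ∈ wordFiltration K D x j := by
    intro j
    induction j with
    | zero => simpa using pow_mem_wordFiltration_zero (K := K) (x := x) (D := D) 0
    | succ j ih =>
      rw [pow_succ]
      exact mul_mem_wordFiltration hx ih hP
  simpa [wordFiltration_eq_bot hnil] using hpow m

end WordFiltration

section RaisesDegree

variable {m R : Type*} [Semiring R]

def RaisesDegree (f : m → ℕ) (k : ℕ) (M : Matrix m m R) : Prop :=
  ∀ i j, M i j ≠ 0 → f i = f j + k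

theorem raisesDegree_diagonal [DecidableEq m] (f : m → ℕ) (d : m → R) :
    RaisesDegree f 0 (Matrix.diagonal d) := fun i j h => by
  obtain rfl : i = j := by_contra fun hij => h (Matrix.diagonal_apply_ne d hij)
  rfl

theorem raisesDegree_one [DecidableEq m] (f : m → ℕ) : RaisesDegree f 0 (1 : Matrix m m R) := by
  simpa using raisesDegree_diagonal f (1 : m → R)

theorem RaisesDegree.mul [Fintype m] {f : m → ℕ} {k k' : ℕ} {M N : Matrix m m R}
    (hM : RaisesDegree f k M) (hN : RaisesDegree f k' N) : RaisesDegree f (k + k') (M * N) :=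
  fun i j h => by
    obtain ⟨c, -, hc⟩ := Finset.exists_ne_zero_of_sum_ne_zero h
    have := hM i c (left_ne_zero_of_mul hc)
    have := hN c j (right_ne_zero_of_mul hc)
    omega

theorem RaisesDegree.list_prod_map [Fintype m] [DecidableEq m] {ι : Type*} {f : m → ℕ}
    {x : ι → Matrix m m R} (hx : ∀ i, RaisesDegree f 1 (x i)) (l : List ι) :
    RaisesDegree f l.length (l.map x).prod := by
  induction l with
  | nil => exact raisesDegree_one f
  | cons i l ih => simpa [add_comm] using (hx i).mul ih

theorem RaisesDegree.eq_zero {f : m → ℕ} {k : ℕ} {M : Matrix m m R} (hM : RaisesDegree f k M)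
    (hf : ∀ i, f i < k) : M = 0 := by
  ext i j
  by_contra h
  have := hM i j h
  have := hf i
  omega

end RaisesDegree

theorem Matrix.aeval_diagonal {n R : Type*} [Fintype n] [DecidableEq n] [CommRing R] (d : n → R)
    (p : R[X]) : aeval (Matrix.diagonal d) p = Matrix.diagonal fun i => aeval (d i) p := by
  rw [← Matrix.diagonalAlgHom_apply R, aeval_algHom_apply, aeval_pi_apply,
    Matrix.diagonalAlgHom_apply]

theorem conj_ω_mul_ω (n : ℕ) : starRingEnd ℂ (ω n) * ω n = 1 := by
  rw [ω, ← Complex.exp_conj, ← Complex.exp_add, ← Complex.exp_zero]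
  congr 1
  simp [map_ofNat]
  ring

theorem mconj_A0 : mconj A0 = A0 := by
  ext i j; fin_cases i <;> fin_cases j <;> simp [mconj, A0]

theorem A1_eq_diagonal (n : ℕ) : A1 n = Matrix.diagonal ![1, ω n] := by
  ext i j; fin_cases i <;> fin_cases j <;> simp [A1]

theorem mconj_A1_eq_diagonal (n : ℕ) :
    mconj (A1 n) = Matrix.diagonal ![1, starRingEnd ℂ (ω n)] := by
  ext i j; fin_cases i <;> fin_cases j <;> simp [mconj, A1]

theorem scalarCommute_diagonal_A0 (c : ℂ) : ScalarCommute ℂ (Matrix.diagonal ![1, c]) A0 :=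
  ⟨c, by ext i j; fin_cases i <;> fin_cases j <;> simp [A0, Matrix.vecMul_diagonal]⟩

theorem raisesDegree_A0 : RaisesDegree Fin.val 1 A0 := by
  intro i j; fin_cases i <;> fin_cases j <;> simp [A0]

theorem raisesDegree_Jplus (r : ℕ) : RaisesDegree Fin.val 1 (Jplus r) := fun i j h => by
  by_contra hij
  exact h (by simp [Jplus, hij])

abbrev MagnonIdx (r s : ℕ) : Type := ((Fin 2 × Fin 2) × Fin (r + 1)) × Fin (s + 1)

noncomputable def magnonDiag (n r s : ℕ) : Matrix (MagnonIdx r s) (MagnonIdx r s) ℂ :=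
  (mconj (A1 n) ⊗ₖ A1 n) ⊗ₖ 1 ⊗ₖ 1

noncomputable def magnonLetter (n r s : ℕ) : Fin 4 → Matrix (MagnonIdx r s) (MagnonIdx r s) ℂ :=
  ![(mconj A0 ⊗ₖ A0) ⊗ₖ 1 ⊗ₖ 1,
    (mconj A0 ⊗ₖ A1 n) ⊗ₖ 1 ⊗ₖ Jplus s,
    (mconj (A1 n) ⊗ₖ A0) ⊗ₖ Jplus r ⊗ₖ 1,
    (mconj (A1 n) ⊗ₖ A1 n) ⊗ₖ Jplus r ⊗ₖ Jplus s]

theorem Ers_eq_magnonDiag_add_sum (n r s : ℕ) :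
    Ers n r s = magnonDiag n r s + ∑ i, magnonLetter n r s i := by
  simp only [Ers, magnonDiag, magnonLetter, Fin.sum_univ_four, Matrix.cons_val_zero,
    Matrix.cons_val_one, Matrix.cons_val]
  abel

theorem magnonDiag_eq_diagonal (n r s : ℕ) :
    magnonDiag n r s =
      Matrix.diagonal fun p => ![1, starRingEnd ℂ (ω n)] p.1.1.1 * ![1, ω n] p.1.1.2 := by
  rw [magnonDiag, mconj_A1_eq_diagonal, A1_eq_diagonal]
  simp only [← Matrix.diagonal_one, Matrix.diagonal_kronecker_diagonal, mul_one]

theorem aeval_magnonDiag (n r s : ℕ) :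
    aeval (magnonDiag n r s) ((X - 1) * (X - C (ω n)) * (X - C (starRingEnd ℂ (ω n)))) = 0 := by
  rw [magnonDiag_eq_diagonal, Matrix.aeval_diagonal, Matrix.diagonal_eq_zero]
  funext ⟨⟨⟨a, b⟩, _⟩, _⟩
  fin_cases a <;> fin_cases b <;> simp [conj_ω_mul_ω]

theorem scalarCommute_magnonDiag_magnonLetter (n r s : ℕ) (i : Fin 4) :
    ScalarCommute ℂ (magnonDiag n r s) (magnonLetter n r s i) := by
  have hL := scalarCommute_diagonal_A0 (starRingEnd ℂ (ω n))
  have hR := scalarCommute_diagonal_A0 (ω n)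
  simp only [magnonDiag, magnonLetter, mconj_A0, mconj_A1_eq_diagonal]
  simp only [A1_eq_diagonal]
  fin_cases i <;> dsimp only [Fin.reduceFinMk, Matrix.cons_val] <;>
    exact .kronecker (.kronecker (.kronecker (by first | assumption | exact .refl _)
      (by first | assumption | exact .refl _)) (.one_left _)) (.one_left _)

def leftWeight (r s : ℕ) (p : MagnonIdx r s) : ℕ := (p.1.1.1 : ℕ) + p.1.2

def rightWeight (r s : ℕ) (p : MagnonIdx r s) : ℕ := (p.1.1.2 : ℕ) + p.2

theorem raisesDegree_kronecker₄ {r s b c j j' : ℕ} {B C : Matrix (Fin 2) (Fin 2) ℂ}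
    {J : Matrix (Fin (r + 1)) (Fin (r + 1)) ℂ} {J' : Matrix (Fin (s + 1)) (Fin (s + 1)) ℂ}
    (hB : RaisesDegree Fin.val b B) (hC : RaisesDegree Fin.val c C)
    (hJ : RaisesDegree Fin.val j J) (hJ' : RaisesDegree Fin.val j' J') :
    RaisesDegree (leftWeight r s) (b + j) ((B ⊗ₖ C) ⊗ₖ J ⊗ₖ J') ∧
      RaisesDegree (rightWeight r s) (c + j') ((B ⊗ₖ C) ⊗ₖ J ⊗ₖ J') := by
  constructor <;> rintro ⟨⟨⟨u, v⟩, w⟩, z⟩ ⟨⟨⟨u', v'⟩, w'⟩, z'⟩ h <;>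
    simp only [Matrix.kroneckerMap_apply, ne_eq, mul_eq_zero, not_or] at h <;>
    obtain ⟨⟨⟨h₁, h₂⟩, h₃⟩, h₄⟩ := h <;>
    simp only [leftWeight, rightWeight, hB _ _ h₁, hC _ _ h₂, hJ _ _ h₃, hJ' _ _ h₄] <;> omega

theorem raisesDegree_magnonLetter (n r s : ℕ) (i : Fin 4) :
    RaisesDegree (leftWeight r s) 1 (magnonLetter n r s i) ∧
      RaisesDegree (rightWeight r s) 1 (magnonLetter n r s i) := by
  have hA0 := raisesDegree_A0
  have hD (c : ℂ) : RaisesDegree Fin.val 0 (Matrix.diagonal ![1, c]) := raisesDegree_diagonal _ _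
  simp only [magnonLetter, mconj_A0, mconj_A1_eq_diagonal]
  simp only [A1_eq_diagonal]
  fin_cases i
  · exact raisesDegree_kronecker₄ hA0 hA0 (raisesDegree_one _) (raisesDegree_one _)
  · exact raisesDegree_kronecker₄ hA0 (hD _) (raisesDegree_one _) (raisesDegree_Jplus s)
  · exact raisesDegree_kronecker₄ (hD _) hA0 (raisesDegree_Jplus r) (raisesDegree_one _)
  · exact raisesDegree_kronecker₄ (hD _) (hD _) (raisesDegree_Jplus r) (raisesDegree_Jplus s)

theorem magnonLetter_word_eq_zero (n r s : ℕ) (l : List (Fin 4)) (hl : min r s + 2 ≤ l.length) :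
    (l.map (magnonLetter n r s)).prod = 0 := by
  rcases le_total r s with hrs | hrs
  · refine RaisesDegree.eq_zero (RaisesDegree.list_prod_map
      (fun i => (raisesDegree_magnonLetter n r s i).1) l) fun p => ?_
    have := p.1.1.1.is_lt
    have := p.1.2.is_lt
    simp only [leftWeight]
    omega
  · refine RaisesDegree.eq_zero (RaisesDegree.list_prod_map
      (fun i => (raisesDegree_magnonLetter n r s i).2) l) fun p => ?_
    have := p.1.1.2.is_lt
    have := p.2.is_lt
    simp only [rightWeight]
    omega

theorem Ers_annihilating_general (n r s : ℕ) :
    (Ers n r s - 1) ^ (min r s + 2) *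
      (Ers n r s - ω n • 1) ^ (min r s + 2) *
      (Ers n r s - starRingEnd ℂ (ω n) • 1) ^ (min r s + 2) = 0 := by
  have h := aeval_add_sum_pow_eq_zero (scalarCommute_magnonDiag_magnonLetter n r s)
    (magnonLetter_word_eq_zero n r s) (aeval_magnonDiag n r s)
  rw [← Ers_eq_magnonDiag_add_sum, ← map_pow, mul_pow, mul_pow] at h
  simpa only [map_mul, map_pow, map_sub, map_one, aeval_X, aeval_C,
    Algebra.algebraMap_eq_smul_one] using h

/-- Annihilating polynomial for `E_{r,s}`: with `m = min(r,s) + 2`,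
`(E_{r,s} − I)^m (E_{r,s} − ωI)^m (E_{r,s} − ω̄I)^m = 0`; in particular every Jordan
block of `E_{r,s}` has size at most `min(r,s) + 2`. -/
theorem Ers_annihilating (n r s : ℕ) (hn : 0 < n) (hr : r ≤ n) (hs : s ≤ n) :
    (Ers n r s - 1) ^ (min r s + 2) *
      (Ers n r s - ω n • 1) ^ (min r s + 2) *
      (Ers n r s - starRingEnd ℂ (ω n) • 1) ^ (min r s + 2) = 0 :=
  Ers_annihilating_general n r s
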